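/- arXiv:1706.04180 — 2 statements merged into one kernel-verified Lean document; each statement's English description precedes it below -/
import Mathlib

section
/- The function f(E, B) = Eᵀ(I + 2B)⁻¹E, defined on pairs (E, B) with E ∈ ℝ^d and B a d×d symmetric matrix with I + 2B positive definite, is jointly convex in (E, B). -/
/-!
For positive definite `A`, completing the square gives
`Eᵀ A⁻¹ E = max_Z (2 E⬝Z - Zᵀ A Z)`, the maximum being attained at `Z = A⁻¹ E`. Each function
`(E, A) ↦ 2 E⬝Z - Zᵀ A Z` is linear, so `(E, A) ↦ Eᵀ A⁻¹ E` is convex on the convex cone of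
positive definite matrices, and `(E, B) ↦ (E, I + 2B)` is affine.
-/

open Matrix

section

variable {𝕜 E β ι : Type*} [Semiring 𝕜] [PartialOrder 𝕜] [AddCommMonoid E] [SMul 𝕜 E]
  [AddCommMonoid β] [PartialOrder β] [IsOrderedAddMonoid β] [Module 𝕜 β] [PosSMulMono 𝕜 β]

theorem ConvexOn.of_forall_le_of_exists_eq {s : Set E} {f : E → β} {g : ι → E → β}
    (hs : Convex 𝕜 s) (hg : ∀ i, ConvexOn 𝕜 s (g i)) (hle : ∀ i, ∀ x ∈ s, g i x ≤ f x)
    (heq : ∀ x ∈ s, ∃ i, g i x = f x) : ConvexOn 𝕜 s f := by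
  refine ⟨hs, fun x hx y hy a b ha hb hab => ?_⟩
  obtain ⟨i, hi⟩ := heq _ (hs hx hy ha hb hab)
  calc f (a • x + b • y) = g i (a • x + b • y) := hi.symm
    _ ≤ a • g i x + b • g i y := (hg i).2 hx hy ha hb hab
    _ ≤ a • f x + b • f y := by gcongr <;> exact hle i _ ‹_›

end

namespace Matrix

theorem convex_setOf_posDef {n : Type*} : Convex ℝ {A : Matrix n n ℝ | A.PosDef} :=
  convex_iff_forall_pos.2 fun _ hA _ hB _ _ ha hb _ => (hA.smul ha).add (hB.smul hb)

theorem isSymm_of_isSymm_one_add_two_nsmul {α n : Type*} [AddGroupWithOne α]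
    [IsAddTorsionFree α] [DecidableEq n] {B : Matrix n n α} (h : (1 + 2 • B).IsSymm) :
    B.IsSymm :=
  IsSymm.ext fun i j => nsmul_right_injective two_ne_zero <| by
    simpa [isSymm_one.apply i j] using h.apply i j

variable {n : Type*} [Fintype n]

theorem convexOn_two_mul_dotProduct_sub (Z : n → ℝ) {s : Set ((n → ℝ) × Matrix n n ℝ)}
    (hs : Convex ℝ s) : ConvexOn ℝ s fun p => 2 * (p.1 ⬝ᵥ Z) - Z ⬝ᵥ p.2 *ᵥ Z := by
  refine ⟨hs, fun x _ y _ a b _ _ _ => le_of_eq ?_⟩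
  simp only [Prod.fst_add, Prod.snd_add, Prod.smul_fst, Prod.smul_snd, add_dotProduct,
    smul_dotProduct, add_mulVec, smul_mulVec, dotProduct_add, dotProduct_smul, smul_eq_mul]
  ring

variable [DecidableEq n]

theorem PosDef.mulVec_inv_mulVec {A : Matrix n n ℝ} (hA : A.PosDef) (E : n → ℝ) :
    A *ᵥ (A⁻¹ *ᵥ E) = E := by
  rw [mulVec_mulVec, mul_nonsing_inv _ ((isUnit_iff_isUnit_det A).1 hA.isUnit), one_mulVec]

theorem PosDef.two_mul_dotProduct_sub_le {A : Matrix n n ℝ} (hA : A.PosDef) (E Z : n → ℝ) :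
    2 * (E ⬝ᵥ Z) - Z ⬝ᵥ A *ᵥ Z ≤ E ⬝ᵥ A⁻¹ *ᵥ E := by
  set v := A⁻¹ *ᵥ E
  have hAv : A *ᵥ v = E := hA.mulVec_inv_mulVec E
  have hvAZ : v ⬝ᵥ A *ᵥ Z = E ⬝ᵥ Z := by
    rw [dotProduct_mulVec, ← mulVec_transpose, (isHermitian_iff_isSymm.1 hA.isHermitian).eq, hAv]
  have hsq : 0 ≤ (Z - v) ⬝ᵥ A *ᵥ (Z - v) := hA.posSemidef.dotProduct_mulVec_nonneg _
  have hexpand : (Z - v) ⬝ᵥ A *ᵥ (Z - v) = Z ⬝ᵥ A *ᵥ Z - 2 * (E ⬝ᵥ Z) + E ⬝ᵥ v := by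
    rw [mulVec_sub, dotProduct_sub, sub_dotProduct, sub_dotProduct, hAv, hvAZ,
      dotProduct_comm Z E, dotProduct_comm v E]
    ring
  linarith

theorem PosDef.two_mul_dotProduct_inv_mulVec_sub {A : Matrix n n ℝ} (hA : A.PosDef)
    (E : n → ℝ) :
    2 * (E ⬝ᵥ A⁻¹ *ᵥ E) - (A⁻¹ *ᵥ E) ⬝ᵥ A *ᵥ (A⁻¹ *ᵥ E) = E ⬝ᵥ A⁻¹ *ᵥ E := by
  rw [hA.mulVec_inv_mulVec, dotProduct_comm _ E]
  ring

theorem convexOn_dotProduct_inv_mulVec :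
    ConvexOn ℝ {p : (n → ℝ) × Matrix n n ℝ | p.2.PosDef} fun p => p.1 ⬝ᵥ p.2⁻¹ *ᵥ p.1 := by
  have hs : Convex ℝ {p : (n → ℝ) × Matrix n n ℝ | p.2.PosDef} :=
    convex_setOf_posDef.linear_preimage (LinearMap.snd ℝ _ _)
  exact .of_forall_le_of_exists_eq hs (fun Z => convexOn_two_mul_dotProduct_sub Z hs)
    (fun Z p hp => hp.two_mul_dotProduct_sub_le p.1 Z)
    fun p hp => ⟨_, hp.two_mul_dotProduct_inv_mulVec_sub p.1⟩

end Matrix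

/-- The function `(E,B) ↦ Eᵀ(I+2B)⁻¹E` is jointly convex on the set of pairs where `B` is
symmetric and `I + 2B` is positive definite. -/
theorem convexOn_quadratic_inv
    (d : ℕ) :
    ConvexOn ℝ
      {p : (Fin d → ℝ) × Matrix (Fin d) (Fin d) ℝ |
        p.2.IsSymm ∧ ((1 : Matrix (Fin d) (Fin d) ℝ) + 2 • p.2).PosDef}
      (fun p => p.1 ⬝ᵥ ((1 : Matrix (Fin d) (Fin d) ℝ) + 2 • p.2)⁻¹.mulVec p.1) := by
  let g : (Fin d → ℝ) × Matrix (Fin d) (Fin d) ℝ →ᵃ[ℝ] (Fin d → ℝ) × Matrix (Fin d) (Fin d) ℝ :=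
    (LinearMap.id.prodMap (2 • LinearMap.id)).toAffineMap + AffineMap.const ℝ _ (0, 1)
  have hg : ∀ p, g p = (p.1, 1 + 2 • p.2) := fun p => by simp [g, add_comm]
  have hdom : {p : (Fin d → ℝ) × Matrix (Fin d) (Fin d) ℝ |
        p.2.IsSymm ∧ ((1 : Matrix (Fin d) (Fin d) ℝ) + 2 • p.2).PosDef} =
      g ⁻¹' {q | q.2.PosDef} := by
    ext p
    simp only [Set.mem_preimage, hg]
    exact and_iff_right_of_imp fun h =>
      isSymm_of_isSymm_one_add_two_nsmul (isHermitian_iff_isSymm.1 h.isHermitian)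
  rw [hdom]
  exact (convexOn_dotProduct_inv_mulVec.comp_affineMap g).congr fun p _ => by simp [hg]
end

section
/- In a finite-dimensional inner product space, let f(Z,M) = (1/2)trace(M) if M ≥ Z⊗Z and +∞ otherwise, defined on ℝ^d × Sym(d). Its Legendre–Fenchel conjugate at (−E, −B) equals (1/2)Eᵀ(I+2B)⁻¹E if I+2B is positive definite, +∞ if I+2B is not positive semidefinite. -/
/-!
Write `A = I + 2B`. Since `trace (B M) + ½ trace M = ½ trace (A M)`, the objective is
`-(E·Z) - ½ trace (A M)`. If `A ⪰ 0`, then `trace (A (M - Z Zᵀ)) ≥ 0` (write `A = √A √A` and cycle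
the trace), so for fixed `Z` the best choice is `M = Z Zᵀ`, leaving the quadratic
`-(E·Z) - ½ Zᵀ A Z`. For `A ≻ 0`, completing the square at `Z = -A⁻¹E` gives the maximum
`½ Eᵀ A⁻¹ E`. If `A` is symmetric but not `⪰ 0`, pick `v` with `vᵀ A v < 0`: along `Z = t v`,
`M = Z Zᵀ` the objective grows like `t²`.
-/

open Matrix Filter

namespace Matrix

variable {n : Type*} [Fintype n]

theorem trace_mul_vecMulVec {R : Type*} [CommSemiring R] (A : Matrix n n R) (a b : n → R) :
    (A * vecMulVec a b).trace = b ⬝ᵥ A *ᵥ a := by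
  rw [mul_vecMulVec, trace_vecMulVec, dotProduct_comm]

open scoped ComplexOrder MatrixOrder in
theorem PosSemidef.trace_mul_nonneg {𝕜 : Type*} [RCLike 𝕜] {A P : Matrix n n 𝕜}
    (hA : A.PosSemidef) (hP : P.PosSemidef) : 0 ≤ (A * P).trace := by
  classical
  have hS : (CFC.sqrt A).IsHermitian := (CFC.sqrt_nonneg A).posSemidef.isHermitian
  have hcycle : (A * P).trace = (CFC.sqrt A * P * CFC.sqrt A).trace := by
    rw [trace_mul_cycle, CFC.sqrt_mul_sqrt_self A hA.nonneg]
  rw [hcycle]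
  simpa [hS.eq] using (hP.conjTranspose_mul_mul_same (CFC.sqrt A)).trace_nonneg

theorem PosSemidef.dotProduct_mulVec_le_trace_mul {A M : Matrix n n ℝ}
    (hA : A.PosSemidef) {z : n → ℝ} (hM : (M - vecMulVec z z).PosSemidef) :
    z ⬝ᵥ A *ᵥ z ≤ (A * M).trace := by
  have := hA.trace_mul_nonneg hM
  rw [mul_sub, trace_sub, trace_mul_vecMulVec] at this
  linarith

theorem IsSymm.add_inv_mulVec_dotProduct_mulVec {R : Type*} [CommRing R] [DecidableEq n]
    {A : Matrix n n R} (hA : A.IsSymm) (hdet : IsUnit A.det) (e z : n → R) :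
    (z + A⁻¹ *ᵥ e) ⬝ᵥ A *ᵥ (z + A⁻¹ *ᵥ e) = z ⬝ᵥ A *ᵥ z + 2 * (e ⬝ᵥ z) + e ⬝ᵥ A⁻¹ *ᵥ e := by
  have hAe : A *ᵥ (A⁻¹ *ᵥ e) = e := by rw [mulVec_mulVec, mul_nonsing_inv A hdet, one_mulVec]
  have hsymm : A⁻¹ *ᵥ e ⬝ᵥ A *ᵥ z = z ⬝ᵥ e := by
    rw [dotProduct_mulVec, ← mulVec_transpose, hA.eq, hAe, dotProduct_comm]
  rw [mulVec_add, hAe, dotProduct_add, add_dotProduct, add_dotProduct, hsymm,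
    dotProduct_comm z e, dotProduct_comm (A⁻¹ *ᵥ e) e]
  ring

theorem PosDef.neg_dotProduct_sub_half_le [DecidableEq n] {A : Matrix n n ℝ} (hA : A.PosDef)
    (e z : n → ℝ) : -(e ⬝ᵥ z) - 1 / 2 * (z ⬝ᵥ A *ᵥ z) ≤ 1 / 2 * (e ⬝ᵥ A⁻¹ *ᵥ e) := by
  have hsq := (isHermitian_iff_isSymm.mp hA.isHermitian).add_inv_mulVec_dotProduct_mulVec
    (isUnit_iff_ne_zero.mpr hA.det_pos.ne') e z
  have := hA.posSemidef.dotProduct_mulVec_nonneg (z + A⁻¹ *ᵥ e)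
  simp only [star_trivial] at this
  linarith

theorem PosDef.neg_dotProduct_sub_half_eq [DecidableEq n] {A : Matrix n n ℝ} (hA : A.PosDef)
    (e : n → ℝ) :
    -(e ⬝ᵥ -(A⁻¹ *ᵥ e)) - 1 / 2 * (-(A⁻¹ *ᵥ e) ⬝ᵥ A *ᵥ -(A⁻¹ *ᵥ e))
      = 1 / 2 * (e ⬝ᵥ A⁻¹ *ᵥ e) := by
  have hsq := (isHermitian_iff_isSymm.mp hA.isHermitian).add_inv_mulVec_dotProduct_mulVec
    (isUnit_iff_ne_zero.mpr hA.det_pos.ne') e (-(A⁻¹ *ᵥ e))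
  rw [neg_add_cancel, zero_dotProduct] at hsq
  linarith

theorem trace_mul_add_half_trace [DecidableEq n] (B M : Matrix n n ℝ) :
    (B * M).trace + 1 / 2 * M.trace = 1 / 2 * ((1 + 2 • B) * M).trace := by
  rw [add_mul, one_mul, smul_mul, trace_add, trace_smul, nsmul_eq_mul]
  push_cast
  ring

end Matrix

section Conjugate

variable {n : Type*} [Fintype n] [DecidableEq n]

/-- The values whose supremum is `f*(−E, −B)`; for symmetric `M`, `⟨B, M⟩ = trace (B * M)`. -/
def conjugateValues (E : n → ℝ) (B : Matrix n n ℝ) : Set ℝ :=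
  {x | ∃ (Z : n → ℝ) (M : Matrix n n ℝ), M.IsSymm ∧ (M - vecMulVec Z Z).PosSemidef ∧
    x = -(E ⬝ᵥ Z) - (B * M).trace - (1/2) * M.trace}

theorem objective_mem_conjugateValues (E : n → ℝ) (B : Matrix n n ℝ) (z : n → ℝ) :
    -(E ⬝ᵥ z) - 1 / 2 * (z ⬝ᵥ (1 + 2 • B) *ᵥ z) ∈ conjugateValues E B := by
  refine ⟨z, vecMulVec z z, transpose_vecMulVec z z, by simpa using PosSemidef.zero, ?_⟩
  rw [← trace_mul_vecMulVec, ← trace_mul_add_half_trace]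
  ring

theorem exists_le_objective_of_mem_conjugateValues {E : n → ℝ} {B : Matrix n n ℝ}
    (hA : (1 + 2 • B).PosSemidef) {x : ℝ} (hx : x ∈ conjugateValues E B) :
    ∃ z, x ≤ -(E ⬝ᵥ z) - 1 / 2 * (z ⬝ᵥ (1 + 2 • B) *ᵥ z) := by
  obtain ⟨z, M, -, hM, rfl⟩ := hx
  refine ⟨z, ?_⟩
  have := hA.dotProduct_mulVec_le_trace_mul hM
  have := trace_mul_add_half_trace B M
  linarith

theorem isGreatest_conjugateValues (E : n → ℝ) {B : Matrix n n ℝ} (hA : (1 + 2 • B).PosDef) :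
    IsGreatest (conjugateValues E B) (1 / 2 * (E ⬝ᵥ (1 + 2 • B)⁻¹ *ᵥ E)) := by
  refine ⟨?_, fun x hx => ?_⟩
  · rw [← hA.neg_dotProduct_sub_half_eq]
    exact objective_mem_conjugateValues E B _
  · obtain ⟨z, hz⟩ := exists_le_objective_of_mem_conjugateValues hA.posSemidef hx
    exact hz.trans (hA.neg_dotProduct_sub_half_le E z)

theorem not_bddAbove_conjugateValues (E : n → ℝ) {B : Matrix n n ℝ} (hB : B.IsSymm)
    (hA : ¬(1 + 2 • B).PosSemidef) : ¬BddAbove (conjugateValues E B) := by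
  have hherm : (1 + 2 • B).IsHermitian := isHermitian_iff_isSymm.mpr (isSymm_one.add (hB.smul 2))
  obtain ⟨v, hv⟩ : ∃ v : n → ℝ, v ⬝ᵥ (1 + 2 • B) *ᵥ v < 0 := by
    simpa only [posSemidef_iff_dotProduct_mulVec, hherm, true_and, not_forall, not_le,
      star_trivial] using hA
  have hray : Tendsto (fun t : ℝ => t * (-(E ⬝ᵥ v) + t * (-(1 / 2) * (v ⬝ᵥ (1 + 2 • B) *ᵥ v))))
      atTop atTop :=
    tendsto_id.atTop_mul_atTop₀ <| tendsto_atTop_add_const_left _ _ <|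
      tendsto_id.atTop_mul_const (by linarith)
  refine fun hbdd => not_bddAbove_of_tendsto_atTop hray (hbdd.mono ?_)
  rintro _ ⟨t, rfl⟩
  convert objective_mem_conjugateValues E B (t • v) using 1
  simp only [dotProduct_smul, smul_dotProduct, mulVec_smul, smul_eq_mul]
  ring

end Conjugate

/-- Legendre–Fenchel conjugate of `f(Z,M) = ½ trace M` (on `{M ⪰ Z⊗Z}`, `+∞` elsewhere),
evaluated at `(−E, −B)`: it equals `½ Eᵀ(I+2B)⁻¹E` (attained supremum) when `I+2B ≻ 0`,
and is `+∞` when `I+2B` is not positive semidefinite. -/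
theorem conjugate_of_subsolution_functional
    (d : ℕ) (E : Fin d → ℝ) (B : Matrix (Fin d) (Fin d) ℝ) (hB : B.IsSymm) :
    (((1 : Matrix (Fin d) (Fin d) ℝ) + 2 • B).PosDef →
      IsGreatest
        {x : ℝ | ∃ (Z : Fin d → ℝ) (M : Matrix (Fin d) (Fin d) ℝ),
          M.IsSymm ∧ (M - vecMulVec Z Z).PosSemidef ∧
          x = -(E ⬝ᵥ Z) - (B * M).trace - (1/2) * M.trace}
        ((1/2) * (E ⬝ᵥ ((1 : Matrix (Fin d) (Fin d) ℝ) + 2 • B)⁻¹.mulVec E))) ∧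
    (¬ ((1 : Matrix (Fin d) (Fin d) ℝ) + 2 • B).PosSemidef →
      ¬ BddAbove
        {x : ℝ | ∃ (Z : Fin d → ℝ) (M : Matrix (Fin d) (Fin d) ℝ),
          M.IsSymm ∧ (M - vecMulVec Z Z).PosSemidef ∧
          x = -(E ⬝ᵥ Z) - (B * M).trace - (1/2) * M.trace}) :=
  ⟨isGreatest_conjugateValues E, not_bddAbove_conjugateValues E hB⟩
end
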